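/- arXiv:0902.4165 — 5 statements merged into one kernel-verified Lean document; each statement's English description precedes it below -/
import Mathlib

section
/- Let m ≥ 1, let a₁, …, a_m > 0 be real numbers, r > -1, c ∈ ℝ, and write 𝐚 = (a₁,…,a_m). Then ∫_{[-1,1]^m} (𝐚·𝐱 + c)₊^r d𝐱 = (1/(a₁⋯a_m·(r+1)(r+2)⋯(r+m))) · Σ_{ε₁,…,ε_m ∈ {±1}} ε₁⋯ε_m · (ε₁a₁ + ⋯ + ε_m a_m + c)₊^{r+m}. -/
open scoped BigOperators

/-- `x₊^r`: `x^r` if `x > 0`, else `0`. -/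
noncomputable def plusPow (x r : ℝ) : ℝ := if 0 < x then x ^ r else 0

/-- The sign `+1` or `-1` associated to a boolean. -/
def sgn (b : Bool) : ℝ := if b then 1 else -1

open MeasureTheory Set intervalIntegral

lemma plusPow_nonneg (x r : ℝ) : 0 ≤ plusPow x r := by
  unfold plusPow; split
  · positivity
  · exact le_refl 0

lemma measurable_plusPow (r : ℝ) : Measurable fun x => plusPow x r := by
  unfold plusPow
  exact Measurable.ite measurableSet_Ioi (measurable_id.pow_const r) measurable_const

lemma plusPow_eq_indicator (r : ℝ) :
    (fun x => plusPow x r) = (Set.Ioi (0:ℝ)).indicator (fun x => x ^ r) := by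
  funext x; simp [plusPow, Set.indicator_apply]

lemma intervalIntegrable_plusPow {r : ℝ} (hr : -1 < r) (α β : ℝ) :
    IntervalIntegrable (fun u => plusPow u r) volume α β := by
  rw [intervalIntegrable_iff, plusPow_eq_indicator]
  rw [MeasureTheory.IntegrableOn, MeasureTheory.integrable_indicator_iff measurableSet_Ioi]
  have h1 : IntegrableOn (fun x : ℝ => x ^ r) (Set.Ioc 0 (α ⊔ β ⊔ 1)) volume := by
    have := intervalIntegrable_rpow' (a := 0) (b := α ⊔ β ⊔ 1) hr
    rw [intervalIntegrable_iff] at this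
    rwa [Set.uIoc_of_le (by positivity)] at this
  rw [MeasureTheory.IntegrableOn, Measure.restrict_restrict measurableSet_Ioi]
  refine h1.mono_set ?_
  intro x hx
  rcases hx with ⟨hx1, hx2⟩
  refine ⟨hx1, ?_⟩
  calc x ≤ α ⊔ β := hx2.2
    _ ≤ α ⊔ β ⊔ 1 := le_sup_left

lemma integral_plusPow_zero {r : ℝ} (hr : -1 < r) (β : ℝ) :
    ∫ u in (0:ℝ)..β, plusPow u r = plusPow β (r + 1) / (r + 1) := by
  have hr1 : r + 1 ≠ 0 := by linarith
  rcases le_or_gt β 0 with hβ | hβ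
  · have h0 : ∫ u in (0:ℝ)..β, plusPow u r = 0 := by
      rw [intervalIntegral.integral_symm]
      have : EqOn (fun u => plusPow u r) (fun _ => (0:ℝ)) (Set.uIcc β 0) := by
        intro u hu
        rw [Set.uIcc_of_le hβ] at hu
        simp only [plusPow, if_neg (not_lt.2 hu.2)]
      rw [intervalIntegral.integral_congr this]
      simp
    rw [h0, plusPow, if_neg (by simpa using not_lt.2 hβ)]  -- plusPow β = 0 since β ≤ 0
    simp
  · have hcong : ∫ u in (0:ℝ)..β, plusPow u r = ∫ u in (0:ℝ)..β, u ^ r := by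
      rw [intervalIntegral.integral_of_le hβ.le, intervalIntegral.integral_of_le hβ.le]
      refine setIntegral_congr_fun measurableSet_Ioc ?_
      intro u hu
      simp [plusPow, if_pos hu.1]
    rw [hcong, integral_rpow (Or.inl hr), Real.zero_rpow hr1, sub_zero,
      plusPow, if_pos hβ]

lemma integral_plusPow {r : ℝ} (hr : -1 < r) (α β : ℝ) :
    ∫ u in α..β, plusPow u r = (plusPow β (r + 1) - plusPow α (r + 1)) / (r + 1) := by
  have h1 : ∫ u in α..(0:ℝ), plusPow u r = - (plusPow α (r+1) / (r+1)) := by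
    rw [intervalIntegral.integral_symm, integral_plusPow_zero hr]
  rw [← intervalIntegral.integral_add_adjacent_intervals
      (intervalIntegrable_plusPow hr α 0) (intervalIntegrable_plusPow hr 0 β),
    h1, integral_plusPow_zero hr]
  ring

lemma integrableOn_affine {a c r : ℝ} (ha : 0 < a) (hr : -1 < r) :
    IntegrableOn (fun t => plusPow (a * t + c) r) (Set.Icc (-1:ℝ) 1) volume := by
  have h := ((intervalIntegrable_plusPow hr (-a + c) (a + c)).comp_add_right c).comp_mul_left (c := a)
  have e1 : (-a + c - c) / a = -1 := by field_simp; ring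
  have e2 : (a + c - c) / a = 1 := by field_simp; ring
  rw [e1, e2, intervalIntegrable_iff] at h
  rw [Set.uIoc_of_le (by norm_num : (-1:ℝ) ≤ 1)] at h
  rwa [integrableOn_Icc_iff_integrableOn_Ioc]

lemma integral_affine {a c r : ℝ} (ha : 0 < a) (hr : -1 < r) :
    ∫ t in Set.Icc (-1:ℝ) 1, plusPow (a * t + c) r
      = (1 / (a * (r + 1))) * (plusPow (a + c) (r + 1) - plusPow (-a + c) (r + 1)) := by
  have hr1 : r + 1 ≠ 0 := by linarith
  rw [MeasureTheory.integral_Icc_eq_integral_Ioc,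
    ← intervalIntegral.integral_of_le (by norm_num : (-1:ℝ) ≤ 1)]
  rw [intervalIntegral.integral_comp_mul_add (fun u => plusPow u r) (ne_of_gt ha) c]
  have e1 : a * (-1) + c = -a + c := by ring
  have e2 : a * 1 + c = a + c := by ring
  rw [e1, e2, integral_plusPow hr, smul_eq_mul]
  field_simp


noncomputable def μI : Measure ℝ := (volume : Measure ℝ).restrict (Set.Icc (-1:ℝ) 1)

instance : IsFiniteMeasure μI :=
  ⟨by rw [μI, Measure.restrict_apply_univ]; exact measure_Icc_lt_top⟩

lemma restrict_cube (m : ℕ) :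
    (volume : Measure (Fin m → ℝ)).restrict (Set.univ.pi fun _ => Set.Icc (-1:ℝ) 1)
      = Measure.pi (fun _ : Fin m => μI) := by
  symm
  apply Measure.pi_eq
  intro s hs
  rw [Measure.restrict_apply (MeasurableSet.univ_pi hs), ← Set.pi_inter_distrib,
    volume_pi_pi]
  simp only [μI]
  exact Finset.prod_congr rfl fun i _ => (Measure.restrict_apply (hs i)).symm

set_option maxHeartbeats 1000000 in
lemma key (m : ℕ) : ∀ (a : Fin m → ℝ), (∀ i, 0 < a i) → ∀ (c r : ℝ), -1 < r →
    Integrable (fun x : Fin m → ℝ => plusPow ((∑ i, a i * x i) + c) r)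
      (Measure.pi fun _ => μI) ∧
    ∫ x : Fin m → ℝ, plusPow ((∑ i, a i * x i) + c) r ∂(Measure.pi fun _ => μI)
      = (1 / ((∏ i, a i) * ∏ k ∈ Finset.range m, (r + (k + 1)))) *
          ∑ ε : Fin m → Bool, (∏ i, sgn (ε i)) *
            plusPow ((∑ i, sgn (ε i) * a i) + c) (r + m) := by
  induction m with
  | zero =>
    intro a ha c r hr
    have hfun : (fun x : Fin 0 → ℝ => plusPow ((∑ i, a i * x i) + c) r)
        = fun _ => plusPow c r := by
      funext x; simp
    rw [hfun]
    constructor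
    · exact integrable_const _
    · rw [MeasureTheory.integral_const]
      simp [Measure.real, Measure.pi_univ]
  | succ m ih =>
    intro a ha c r hr
    have hm0 : (0:ℝ) ≤ (m:ℝ) := Nat.cast_nonneg m
    have hrm : -1 < r + m := by linarith
    have ha0 := ha 0
    set ν : Measure (Fin m → ℝ) := Measure.pi fun _ => μI with hν
    set g : ℝ × (Fin m → ℝ) → ℝ :=
      fun p => plusPow ((∑ j, a j.succ * p.2 j) + (a 0 * p.1 + c)) r with hg
    have hgm : Measurable g := by
      apply (measurable_plusPow r).comp
      fun_prop
    have IH := fun t : ℝ => ih (fun j : Fin m => a j.succ) (fun j : Fin m => ha j.succ) (a 0 * t + c) r hr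
    have hinner : (fun t => ∫ y, g (t, y) ∂ν) = fun t =>
        (1 / ((∏ j : Fin m, a j.succ) * ∏ k ∈ Finset.range m, (r + (k + 1)))) *
          ∑ ε : Fin m → Bool, (∏ j, sgn (ε j)) *
            plusPow ((∑ j : Fin m, sgn (ε j) * a j.succ) + (a 0 * t + c)) (r + m) :=
      funext fun t => (IH t).2
    have haff : ∀ C : ℝ, Integrable (fun t => plusPow (C + (a 0 * t + c)) (r + m)) μI := by
      intro C
      have h2 : ∀ t : ℝ, C + (a 0 * t + c) = a 0 * t + (C + c) := fun t => by ring
      simp only [h2]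
      have := integrableOn_affine (a := a 0) (c := C + c) ha0 hrm
      simpa [μI, MeasureTheory.IntegrableOn] using this
    have hGint : Integrable (fun t =>
        (1 / ((∏ j : Fin m, a j.succ) * ∏ k ∈ Finset.range m, (r + (k + 1)))) *
          ∑ ε : Fin m → Bool, (∏ j, sgn (ε j)) *
            plusPow ((∑ j : Fin m, sgn (ε j) * a j.succ) + (a 0 * t + c)) (r + m)) μI := by
      apply Integrable.const_mul
      apply integrable_finset_sum
      intro ε _
      exact (haff _).const_mul _
    have hInt : Integrable g (μI.prod ν) := by
      refine (integrable_prod_iff hgm.aestronglyMeasurable).2 ⟨?_, ?_⟩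
      · exact Filter.Eventually.of_forall fun t => (IH t).1
      · have hnorm : (fun t => ∫ y, ‖g (t, y)‖ ∂ν) = fun t => ∫ y, g (t, y) ∂ν := by
          funext t
          congr 1
          funext y
          exact Real.norm_of_nonneg (plusPow_nonneg _ _)
        rw [hnorm, hinner]
        exact hGint
    have hmp : MeasurePreserving (MeasurableEquiv.piFinSuccAbove (fun _ : Fin (m+1) => ℝ) 0)
        (Measure.pi fun _ : Fin (m+1) => μI) (μI.prod ν) :=
      measurePreserving_piFinSuccAbove (fun _ : Fin (m+1) => μI) 0
    set e := MeasurableEquiv.piFinSuccAbove (fun _ : Fin (m+1) => ℝ) 0 with he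
    have hcomp : (fun x : Fin (m+1) → ℝ => plusPow ((∑ i, a i * x i) + c) r) = g ∘ e := by
      funext x
      simp only [Function.comp_apply, hg, he, MeasurableEquiv.piFinSuccAbove_apply]
      congr 1
      rw [Fin.sum_univ_succ]
      simp only [Fin.insertNthEquiv_zero, Fin.consEquiv_symm_apply, Fin.tail]
      ring
    constructor
    · rw [hcomp]
      exact (hmp.integrable_comp_emb e.measurableEmbedding).2 hInt
    · rw [hcomp]
      have hic := hmp.integral_comp e.measurableEmbedding g
      rw [show (∫ x, (g ∘ e) x ∂(Measure.pi fun _ : Fin (m+1) => μI))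
            = ∫ x, g (e x) ∂(Measure.pi fun _ : Fin (m+1) => μI) from rfl, hic]
      rw [MeasureTheory.integral_prod _ hInt]
      rw [show (∫ t, (∫ y, g (t, y) ∂ν) ∂μI)
            = ∫ t, ((fun t => ∫ y, g (t, y) ∂ν) t) ∂μI from rfl, hinner]
      rw [MeasureTheory.integral_const_mul]
      rw [MeasureTheory.integral_finset_sum _ (fun ε _ => (haff _).const_mul _)]
      have hval : ∀ S : ℝ, (∫ t, plusPow (S + (a 0 * t + c)) (r + m) ∂μI)
          = (1 / (a 0 * (r + m + 1))) *
            (plusPow (a 0 + (S + c)) (r + m + 1) - plusPow (-(a 0) + (S + c)) (r + m + 1)) := by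
        intro S
        have h2 : ∀ t : ℝ, S + (a 0 * t + c) = a 0 * t + (S + c) := fun t => by ring
        simp only [h2]
        have := integral_affine (a := a 0) (c := S + c) ha0 hrm
        simpa [μI, neg_add_eq_sub] using this
      simp only [MeasureTheory.integral_const_mul, hval]
      -- reassemble the right-hand side
      rw [← Equiv.sum_comp (Fin.consEquiv fun _ : Fin (m+1) => Bool)]
      rw [Fintype.sum_prod_type, Fintype.sum_bool]
      simp only [Equiv.symm_symm, Fin.insertNthEquiv_zero, Fin.consEquiv_apply]
      simp only [Fin.prod_univ_succ, Fin.sum_univ_succ, Fin.cons_zero, Fin.cons_succ, sgn,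
        if_true, if_false, one_mul, neg_one_mul, Finset.prod_range_succ]
      push_cast
      simp only [← add_assoc]
      rw [← Finset.sum_add_distrib, Finset.mul_sum, Finset.mul_sum]
      refine Finset.sum_congr rfl fun ε _ => ?_
      have hP' : (0:ℝ) < ∏ j, a (Fin.succ j) := Finset.prod_pos fun j _ => ha _
      have hQ : (0:ℝ) < ∏ k ∈ Finset.range m, (r + (k + 1)) :=
        Finset.prod_pos fun k _ => by
          have : (0:ℝ) ≤ (k:ℝ) := Nat.cast_nonneg k
          linarith
      have h1 : a 0 ≠ 0 := ne_of_gt ha0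
      have h2 : r + (m:ℝ) + 1 ≠ 0 := by linarith
      have h3 : (∏ j, a (Fin.succ j)) ≠ 0 := ne_of_gt hP'
      have h4 : (∏ k ∈ Finset.range m, (r + (k + 1))) ≠ 0 := ne_of_gt hQ
      field_simp
      ring

theorem stmt_1 (m : ℕ) (hm : 1 ≤ m) (a : Fin m → ℝ) (ha : ∀ i, 0 < a i)
    (r c : ℝ) (hr : -1 < r) :
    (∫ x : Fin m → ℝ in Set.univ.pi fun _ => Set.Icc (-1:ℝ) 1,
        plusPow ((∑ i, a i * x i) + c) r)
      = (1 / ((∏ i, a i) * ∏ k ∈ Finset.range m, (r + (k + 1)))) *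
          ∑ ε : Fin m → Bool, (∏ i, sgn (ε i)) *
            plusPow ((∑ i, sgn (ε i) * a i) + c) (r + m) := by
  have := (key m a ha c r hr).2
  rw [← restrict_cube m] at this
  exact this
end

section
/- The function φ satisfies the functional equation φ(1/t) = t³ · φ(t) for all real t ≠ 0 with t > 0. -/
open scoped BigOperators

/-- The function `φ` from the paper, for `t > 0`. -/
noncomputable def phi (t : ℝ) : ℝ :=
  (1 / (135135 * t ^ 21)) *
    ∑ ε : Fin 7 → Bool, (∏ i, sgn (ε i)) *
      (max (∑ i, sgn (ε i) * t ^ (i : ℕ)) 0) ^ ((13 : ℝ) / 2)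

/-- reversal of `Fin 7` -/
def myrev : Fin 7 → Fin 7 := ![6, 5, 4, 3, 2, 1, 0]

lemma myrev_invol : ∀ i, myrev (myrev i) = i := by decide

def revPerm : Equiv.Perm (Fin 7) := ⟨myrev, myrev, myrev_invol, myrev_invol⟩

def E : (Fin 7 → Bool) ≃ (Fin 7 → Bool) := revPerm.arrowCongr (Equiv.refl Bool)

lemma E_apply (ε : Fin 7 → Bool) (i : Fin 7) : E ε i = ε (myrev i) := rfl

lemma EE (ε : Fin 7 → Bool) : E (E ε) = ε :=
  funext fun i => by rw [E_apply, E_apply, myrev_invol]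

lemma r0 : myrev 0 = 6 := rfl
lemma r1 : myrev 1 = 5 := rfl
lemma r2 : myrev 2 = 4 := rfl
lemma r3 : myrev 3 = 3 := rfl
lemma r4 : myrev 4 = 2 := rfl
lemma r5 : myrev 5 = 1 := rfl
lemma r6 : myrev 6 = 0 := rfl
lemma v0 : ((0 : Fin 7) : ℕ) = 0 := rfl
lemma v1 : ((1 : Fin 7) : ℕ) = 1 := rfl
lemma v2 : ((2 : Fin 7) : ℕ) = 2 := rfl
lemma v3 : ((3 : Fin 7) : ℕ) = 3 := rfl
lemma v4 : ((4 : Fin 7) : ℕ) = 4 := rfl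
lemma v5 : ((5 : Fin 7) : ℕ) = 5 := rfl
lemma v6 : ((6 : Fin 7) : ℕ) = 6 := rfl

theorem stmt_3 (t : ℝ) (ht : t ≠ 0) (ht' : 0 < t) :
    phi (1 / t) = t ^ 3 * phi t := by
  have h6 : (0 : ℝ) < t ^ 6 := by positivity
  have hc : (0 : ℝ) ≤ (t ^ 6)⁻¹ := by positivity
  set z : ℝ := (13 : ℝ) / 2 with hz
  have key : ∀ ε : Fin 7 → Bool,
      (∏ i, sgn ((E ε) i)) *
        (max (∑ i, sgn ((E ε) i) * (1 / t) ^ (i : ℕ)) 0) ^ z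
      = ((t ^ 6)⁻¹) ^ z *
        ((∏ i, sgn (ε i)) * (max (∑ i, sgn (ε i) * t ^ (i : ℕ)) 0) ^ z) := by
    intro ε
    have hprod : (∏ i, sgn ((E ε) i)) = ∏ i, sgn (ε i) := by
      simp only [Fin.prod_univ_seven, E_apply, r0, r1, r2, r3, r4, r5, r6]
      ring
    have hsum : (∑ i, sgn ((E ε) i) * (1 / t) ^ (i : ℕ))
        = (t ^ 6)⁻¹ * ∑ i, sgn (ε i) * t ^ (i : ℕ) := by
      simp only [Fin.sum_univ_seven, E_apply, r0, r1, r2, r3, r4, r5, r6,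
        v0, v1, v2, v3, v4, v5, v6]
      field_simp
      ring
    have hmax : max ((t ^ 6)⁻¹ * ∑ i, sgn (ε i) * t ^ (i : ℕ)) 0
        = (t ^ 6)⁻¹ * max (∑ i, sgn (ε i) * t ^ (i : ℕ)) 0 := by
      rw [mul_max_of_nonneg _ _ hc, mul_zero]
    rw [hprod, hsum, hmax, Real.mul_rpow hc (le_max_right _ _)]
    ring
  have hreindex :
      (∑ ε : Fin 7 → Bool, (∏ i, sgn (ε i)) *
        (max (∑ i, sgn (ε i) * (1 / t) ^ (i : ℕ)) 0) ^ z)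
      = ((t ^ 6)⁻¹) ^ z * ∑ ε : Fin 7 → Bool, (∏ i, sgn (ε i)) *
        (max (∑ i, sgn (ε i) * t ^ (i : ℕ)) 0) ^ z := by
    rw [Finset.mul_sum]
    exact Fintype.sum_equiv E _ _ (fun ε => by
      have h := key (E ε); rwa [EE] at h)
  have hpow : ((t ^ 6)⁻¹) ^ z = (t ^ 39)⁻¹ := by
    rw [← Real.rpow_natCast t 6, ← Real.rpow_natCast t 39,
      ← Real.rpow_neg_one (t ^ ((6 : ℕ) : ℝ)), ← Real.rpow_mul ht'.le,
      ← Real.rpow_mul ht'.le, ← Real.rpow_neg_one (t ^ ((39 : ℕ) : ℝ)),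
      ← Real.rpow_mul ht'.le]
    norm_num [hz]
  unfold phi
  rw [hreindex, hpow]
  field_simp
  ring
end

section
/- For coprime integers a, b (not both zero), the six-dimensional covolume of the lattice spanned by v₁,…,v₆ equals Δ_{(a:b)} = √(a^{12} + a^{10}b² + a^8b^4 + a^6b^6 + a^4b^8 + a²b^{10} + b^{12}), and this satisfies H(a:b)^6 ≤ Δ_{(a:b)} ≤ √7 · H(a:b)^6, where H(a:b) = max{|a|,|b|}. -/
open scoped BigOperators

/-- The vectors `v₁, …, v₆ ∈ ℝ^7`: `vᵢ` has `−a` in coordinate `i`, `b` in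
coordinate `i+1` (0-indexed), and `0` elsewhere. -/
def latVec (a b : ℤ) (i : Fin 6) : Fin 7 → ℝ :=
  fun k => if (k : ℕ) = (i : ℕ) then -(a : ℝ)
           else if (k : ℕ) = (i : ℕ) + 1 then (b : ℝ) else 0

set_option maxHeartbeats 1600000 in
lemma gram_eq (a b : ℤ) :
    (Matrix.of fun i j : Fin 6 => ∑ k, latVec a b i k * latVec a b j k) =
    !![(a:ℝ)^2+(b:ℝ)^2, -((a:ℝ)*(b:ℝ)), 0, 0, 0, 0;
       -((a:ℝ)*(b:ℝ)), (a:ℝ)^2+(b:ℝ)^2, -((a:ℝ)*(b:ℝ)), 0, 0, 0;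
       0, -((a:ℝ)*(b:ℝ)), (a:ℝ)^2+(b:ℝ)^2, -((a:ℝ)*(b:ℝ)), 0, 0;
       0, 0, -((a:ℝ)*(b:ℝ)), (a:ℝ)^2+(b:ℝ)^2, -((a:ℝ)*(b:ℝ)), 0;
       0, 0, 0, -((a:ℝ)*(b:ℝ)), (a:ℝ)^2+(b:ℝ)^2, -((a:ℝ)*(b:ℝ));
       0, 0, 0, 0, -((a:ℝ)*(b:ℝ)), (a:ℝ)^2+(b:ℝ)^2] := by
  ext i j
  fin_cases i <;> fin_cases j <;>
    norm_num [latVec, Fin.sum_univ_succ, Matrix.of_apply, Fin.val_zero, Fin.val_one, Matrix.cons_val_zero, Matrix.cons_val_one, Matrix.head_cons, Matrix.cons_val', Matrix.cons_val_fin_one, Matrix.vecHead, Matrix.vecTail] <;> ring_nf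

set_option maxHeartbeats 1600000 in
set_option maxRecDepth 40000 in
lemma det_eq (a b : ℤ) :
    Matrix.det (Matrix.of fun i j : Fin 6 => ∑ k, latVec a b i k * latVec a b j k) =
    (a:ℝ)^12 + (a:ℝ)^10*(b:ℝ)^2 + (a:ℝ)^8*(b:ℝ)^4 + (a:ℝ)^6*(b:ℝ)^6
      + (a:ℝ)^4*(b:ℝ)^8 + (a:ℝ)^2*(b:ℝ)^10 + (b:ℝ)^12 := by
  rw [gram_eq]
  simp [Matrix.det_succ_row_zero, Fin.sum_univ_succ, Fin.succAbove]
  ring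

lemma term_le {A B M2 : ℝ} (hA0 : 0 ≤ A) (hB0 : 0 ≤ B) (hA : A ≤ M2) (hB : B ≤ M2)
    (i j : ℕ) : A ^ i * B ^ j ≤ M2 ^ (i + j) := by
  rw [pow_add]
  exact mul_le_mul (pow_le_pow_left₀ hA0 hA i) (pow_le_pow_left₀ hB0 hB j)
    (pow_nonneg hB0 j) (pow_nonneg (hA0.trans hA) i)

theorem stmt_9 (a b : ℤ) (hab : ¬(a = 0 ∧ b = 0)) (hcop : IsCoprime a b) :
    Real.sqrt (Matrix.det (Matrix.of fun i j : Fin 6 => ∑ k, latVec a b i k * latVec a b j k))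
        = Real.sqrt ((a:ℝ)^12 + (a:ℝ)^10*(b:ℝ)^2 + (a:ℝ)^8*(b:ℝ)^4 + (a:ℝ)^6*(b:ℝ)^6
            + (a:ℝ)^4*(b:ℝ)^8 + (a:ℝ)^2*(b:ℝ)^10 + (b:ℝ)^12) ∧
    (max |(a:ℝ)| |(b:ℝ)|) ^ 6
        ≤ Real.sqrt ((a:ℝ)^12 + (a:ℝ)^10*(b:ℝ)^2 + (a:ℝ)^8*(b:ℝ)^4 + (a:ℝ)^6*(b:ℝ)^6
            + (a:ℝ)^4*(b:ℝ)^8 + (a:ℝ)^2*(b:ℝ)^10 + (b:ℝ)^12) ∧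
    Real.sqrt ((a:ℝ)^12 + (a:ℝ)^10*(b:ℝ)^2 + (a:ℝ)^8*(b:ℝ)^4 + (a:ℝ)^6*(b:ℝ)^6
            + (a:ℝ)^4*(b:ℝ)^8 + (a:ℝ)^2*(b:ℝ)^10 + (b:ℝ)^12)
        ≤ Real.sqrt 7 * (max |(a:ℝ)| |(b:ℝ)|) ^ 6 := by
  set S : ℝ := (a:ℝ)^12 + (a:ℝ)^10*(b:ℝ)^2 + (a:ℝ)^8*(b:ℝ)^4 + (a:ℝ)^6*(b:ℝ)^6
            + (a:ℝ)^4*(b:ℝ)^8 + (a:ℝ)^2*(b:ℝ)^10 + (b:ℝ)^12 with hS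
  set M : ℝ := max |(a:ℝ)| |(b:ℝ)| with hM
  have hM0 : 0 ≤ M := le_trans (abs_nonneg _) (le_max_left _ _)
  have hA : (a:ℝ)^2 ≤ M^2 := by
    have : |(a:ℝ)| ≤ M := le_max_left _ _
    nlinarith [abs_nonneg (a:ℝ), sq_abs (a:ℝ)]
  have hB : (b:ℝ)^2 ≤ M^2 := by
    have : |(b:ℝ)| ≤ M := le_max_right _ _
    nlinarith [abs_nonneg (b:ℝ), sq_abs (b:ℝ)]
  refine ⟨by rw [det_eq], ?_, ?_⟩
  · -- lower bound
    have hle : (M^6)^2 ≤ S := by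
      rcases max_cases |(a:ℝ)| |(b:ℝ)| with ⟨h1, _⟩ | ⟨h1, _⟩ <;>
      · rw [hM, h1, hS]
        have : |(a:ℝ)|^12 = (a:ℝ)^12 := by rw [← abs_pow, abs_of_nonneg (by positivity)]
        have : |(b:ℝ)|^12 = (b:ℝ)^12 := by rw [← abs_pow, abs_of_nonneg (by positivity)]
        nlinarith [sq_nonneg ((a:ℝ)^5*(b:ℝ)), sq_nonneg ((a:ℝ)^4*(b:ℝ)^2),
          sq_nonneg ((a:ℝ)^3*(b:ℝ)^3), sq_nonneg ((a:ℝ)^2*(b:ℝ)^4),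
          sq_nonneg ((a:ℝ)*(b:ℝ)^5), sq_nonneg ((a:ℝ)^6), sq_nonneg ((b:ℝ)^6)]
    calc M^6 = Real.sqrt ((M^6)^2) := (Real.sqrt_sq (by positivity)).symm
    _ ≤ Real.sqrt S := Real.sqrt_le_sqrt hle
  · -- upper bound
    have hSle : S ≤ 7 * (M^6)^2 := by
      have h0 : (0:ℝ) ≤ (a:ℝ)^2 := sq_nonneg _
      have h1 : (0:ℝ) ≤ (b:ℝ)^2 := sq_nonneg _
      have t0 := term_le h0 h1 hA hB 6 0
      have t1 := term_le h0 h1 hA hB 5 1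
      have t2 := term_le h0 h1 hA hB 4 2
      have t3 := term_le h0 h1 hA hB 3 3
      have t4 := term_le h0 h1 hA hB 2 4
      have t5 := term_le h0 h1 hA hB 1 5
      have t6 := term_le h0 h1 hA hB 0 6
      norm_num at t0 t1 t2 t3 t4 t5 t6
      have e6 : (M^2)^6 = (M^6)^2 := by ring
      rw [e6] at t0 t1 t2 t3 t4 t5 t6
      nlinarith [t0, t1, t2, t3, t4, t5, t6]
    calc Real.sqrt S ≤ Real.sqrt (7 * (M^6)^2) := Real.sqrt_le_sqrt hSle
    _ = Real.sqrt 7 * M^6 := by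
        rw [Real.sqrt_mul (by norm_num), Real.sqrt_sq (by positivity)]
end

section
/- For coprime integers a, b not both zero, the set of integer vectors (f₀, f₁, …, f₆) ∈ ℤ^7 satisfying f₆a^6 + f₅a^5b + f₄a^4b² + f₃a³b³ + f₂a²b^4 + f₁ab^5 + f₀b^6 = 0 is exactly the set of integer linear combinations of the six vectors w₁ = (−a,b,0,0,0,0,0), w₂ = (0,−a,b,0,0,0,0), …, w₆ = (0,0,0,0,0,−a,b), where coordinates are ordered (f₀,f₁,…,f₆) and wᵢ has −a in position i−1 and b in position i (0-indexed). -/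
open scoped BigOperators

/-- The integer vectors `w₁, …, w₆ ∈ ℤ^7`: `wᵢ` has `−a` in coordinate `i`,
`b` in coordinate `i+1` (0-indexed), and `0` elsewhere. -/
def wVec (a b : ℤ) (i : Fin 6) : Fin 7 → ℤ :=
  fun k => if (k : ℕ) = (i : ℕ) then -a
           else if (k : ℕ) = (i : ℕ) + 1 then b else 0

lemma stmt14_fv0 : ((0:Fin 7):ℕ) = 0 := rfl
lemma stmt14_fv1 : ((1:Fin 7):ℕ) = 1 := rfl
lemma stmt14_fv2 : ((2:Fin 7):ℕ) = 2 := rfl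
lemma stmt14_fv3 : ((3:Fin 7):ℕ) = 3 := rfl
lemma stmt14_fv4 : ((4:Fin 7):ℕ) = 4 := rfl
lemma stmt14_fv5 : ((5:Fin 7):ℕ) = 5 := rfl
lemma stmt14_fv6 : ((6:Fin 7):ℕ) = 6 := rfl
lemma stmt14_gv0 : ((0:Fin 6):ℕ) = 0 := rfl
lemma stmt14_gv1 : ((1:Fin 6):ℕ) = 1 := rfl
lemma stmt14_gv2 : ((2:Fin 6):ℕ) = 2 := rfl
lemma stmt14_gv3 : ((3:Fin 6):ℕ) = 3 := rfl
lemma stmt14_gv4 : ((4:Fin 6):ℕ) = 4 := rfl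
lemma stmt14_gv5 : ((5:Fin 6):ℕ) = 5 := rfl
lemma stmt14_fm0 (h : 0 < 7) : ((⟨0, h⟩:Fin 7)) = 0 := rfl
lemma stmt14_fm1 (h : 1 < 7) : ((⟨1, h⟩:Fin 7)) = 1 := rfl
lemma stmt14_fm2 (h : 2 < 7) : ((⟨2, h⟩:Fin 7)) = 2 := rfl
lemma stmt14_fm3 (h : 3 < 7) : ((⟨3, h⟩:Fin 7)) = 3 := rfl
lemma stmt14_fm4 (h : 4 < 7) : ((⟨4, h⟩:Fin 7)) = 4 := rfl
lemma stmt14_fm5 (h : 5 < 7) : ((⟨5, h⟩:Fin 7)) = 5 := rfl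
lemma stmt14_fm6 (h : 6 < 7) : ((⟨6, h⟩:Fin 7)) = 6 := rfl

theorem stmt_14 (a b : ℤ) (hab : ¬(a = 0 ∧ b = 0)) (hcop : IsCoprime a b) :
    {f : Fin 7 → ℤ | ∑ j : Fin 7, f j * a ^ (j : ℕ) * b ^ (6 - (j : ℕ)) = 0}
      = (Submodule.span ℤ (Set.range (wVec a b)) : Set (Fin 7 → ℤ)) := by
  have hw : ∀ i : Fin 6, wVec a b i ∈ Submodule.span ℤ (Set.range (wVec a b)) :=
    fun i => Submodule.subset_span ⟨i, rfl⟩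
  ext f
  simp only [Set.mem_setOf_eq, SetLike.mem_coe]
  constructor
  · intro hf
    have h6 : f 0 * b ^ 6 + f 1 * a * b ^ 5 + f 2 * a ^ 2 * b ^ 4 + f 3 * a ^ 3 * b ^ 3
        + f 4 * a ^ 4 * b ^ 2 + f 5 * a ^ 5 * b + f 6 * a ^ 6 = 0 := by
      rw [← hf, Fin.sum_univ_seven]
      simp only [stmt14_fv0, stmt14_fv1, stmt14_fv2, stmt14_fv3, stmt14_fv4, stmt14_fv5,
        stmt14_fv6]
      norm_num
    by_cases hb : b = 0
    · subst hb
      have ha : a = 1 ∨ a = -1 := Int.isUnit_iff.mp (isCoprime_zero_right.mp hcop)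
      have ha2 : a * a = 1 := by rcases ha with h | h <;> simp [h]
      have ha0 : a ≠ 0 := by rcases ha with h | h <;> simp [h]
      have h60 : f 6 = 0 := by
        have h : f 6 * a ^ 6 = 0 := by linear_combination h6
        exact (mul_eq_zero.mp h).resolve_right (pow_ne_zero 6 ha0)
      have hrep : f = (-(a * f 0)) • wVec a 0 0 + (-(a * f 1)) • wVec a 0 1
          + (-(a * f 2)) • wVec a 0 2 + (-(a * f 3)) • wVec a 0 3
          + (-(a * f 4)) • wVec a 0 4 + (-(a * f 5)) • wVec a 0 5 := by
        funext k
        fin_cases k <;>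
          simp only [wVec, Pi.add_apply, Pi.smul_apply, smul_eq_mul,
            stmt14_fm0, stmt14_fm1, stmt14_fm2, stmt14_fm3, stmt14_fm4, stmt14_fm5, stmt14_fm6,
            stmt14_fv0, stmt14_fv1, stmt14_fv2, stmt14_fv3, stmt14_fv4, stmt14_fv5, stmt14_fv6,
            stmt14_gv0, stmt14_gv1, stmt14_gv2, stmt14_gv3, stmt14_gv4, stmt14_gv5] <;>
          norm_num
        · linear_combination (-(f 0)) * ha2
        · linear_combination (-(f 1)) * ha2
        · linear_combination (-(f 2)) * ha2
        · linear_combination (-(f 3)) * ha2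
        · linear_combination (-(f 4)) * ha2
        · linear_combination (-(f 5)) * ha2
        · exact h60
      rw [hrep]
      exact add_mem (add_mem (add_mem (add_mem (add_mem
        (Submodule.smul_mem _ _ (hw 0)) (Submodule.smul_mem _ _ (hw 1)))
        (Submodule.smul_mem _ _ (hw 2))) (Submodule.smul_mem _ _ (hw 3)))
        (Submodule.smul_mem _ _ (hw 4))) (Submodule.smul_mem _ _ (hw 5))
    · obtain ⟨c5, hc5⟩ : b ∣ f 6 := by
        apply (hcop.symm.pow_right (n := 6)).dvd_of_dvd_mul_right
        exact ⟨-(f 0*b^5 + f 1*a*b^4 + f 2*a^2*b^3 + f 3*a^3*b^2 + f 4*a^4*b + f 5*a^5),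
          by linear_combination h6⟩
      have h5 : f 0*b^5 + f 1*a*b^4 + f 2*a^2*b^3 + f 3*a^3*b^2 + f 4*a^4*b
          + (f 5 + a*c5)*a^5 = 0 := by
        apply mul_left_cancel₀ hb
        linear_combination h6 - a^6 * hc5
      obtain ⟨c4, hc4⟩ : b ∣ (f 5 + a*c5) := by
        apply (hcop.symm.pow_right (n := 5)).dvd_of_dvd_mul_right
        exact ⟨-(f 0*b^4 + f 1*a*b^3 + f 2*a^2*b^2 + f 3*a^3*b + f 4*a^4),
          by linear_combination h5⟩
      have h4 : f 0*b^4 + f 1*a*b^3 + f 2*a^2*b^2 + f 3*a^3*b + (f 4 + a*c4)*a^4 = 0 := by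
        apply mul_left_cancel₀ hb
        linear_combination h5 - a^5 * hc4
      obtain ⟨c3, hc3⟩ : b ∣ (f 4 + a*c4) := by
        apply (hcop.symm.pow_right (n := 4)).dvd_of_dvd_mul_right
        exact ⟨-(f 0*b^3 + f 1*a*b^2 + f 2*a^2*b + f 3*a^3), by linear_combination h4⟩
      have h3 : f 0*b^3 + f 1*a*b^2 + f 2*a^2*b + (f 3 + a*c3)*a^3 = 0 := by
        apply mul_left_cancel₀ hb
        linear_combination h4 - a^4 * hc3
      obtain ⟨c2, hc2⟩ : b ∣ (f 3 + a*c3) := by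
        apply (hcop.symm.pow_right (n := 3)).dvd_of_dvd_mul_right
        exact ⟨-(f 0*b^2 + f 1*a*b + f 2*a^2), by linear_combination h3⟩
      have h2 : f 0*b^2 + f 1*a*b + (f 2 + a*c2)*a^2 = 0 := by
        apply mul_left_cancel₀ hb
        linear_combination h3 - a^3 * hc2
      obtain ⟨c1, hc1⟩ : b ∣ (f 2 + a*c2) := by
        apply (hcop.symm.pow_right (n := 2)).dvd_of_dvd_mul_right
        exact ⟨-(f 0*b + f 1*a), by linear_combination h2⟩
      have h1 : f 0*b + (f 1 + a*c1)*a = 0 := by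
        apply mul_left_cancel₀ hb
        linear_combination h2 - a^2 * hc1
      obtain ⟨c0, hc0⟩ : b ∣ (f 1 + a*c1) := by
        apply (hcop.symm.pow_right (n := 1)).dvd_of_dvd_mul_right
        exact ⟨-(f 0), by linear_combination h1⟩
      have h0 : f 0 = -(a*c0) := by
        apply mul_left_cancel₀ hb
        linear_combination h1 - a * hc0
      have hrep : f = c0 • wVec a b 0 + c1 • wVec a b 1 + c2 • wVec a b 2
          + c3 • wVec a b 3 + c4 • wVec a b 4 + c5 • wVec a b 5 := by
        funext k
        fin_cases k <;>
          simp only [wVec, Pi.add_apply, Pi.smul_apply, smul_eq_mul,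
            stmt14_fm0, stmt14_fm1, stmt14_fm2, stmt14_fm3, stmt14_fm4, stmt14_fm5, stmt14_fm6,
            stmt14_fv0, stmt14_fv1, stmt14_fv2, stmt14_fv3, stmt14_fv4, stmt14_fv5, stmt14_fv6,
            stmt14_gv0, stmt14_gv1, stmt14_gv2, stmt14_gv3, stmt14_gv4, stmt14_gv5] <;>
          norm_num
        · linear_combination h0
        · linear_combination hc0
        · linear_combination hc1
        · linear_combination hc2
        · linear_combination hc3
        · linear_combination hc4
        · linear_combination hc5
      rw [hrep]
      exact add_mem (add_mem (add_mem (add_mem (add_mem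
        (Submodule.smul_mem _ _ (hw 0)) (Submodule.smul_mem _ _ (hw 1)))
        (Submodule.smul_mem _ _ (hw 2))) (Submodule.smul_mem _ _ (hw 3)))
        (Submodule.smul_mem _ _ (hw 4))) (Submodule.smul_mem _ _ (hw 5))
  · intro hf
    refine Submodule.span_induction ?_ ?_ ?_ ?_ hf
    · rintro g ⟨i, rfl⟩
      fin_cases i <;>
        simp [wVec, Fin.sum_univ_seven, stmt14_fv0, stmt14_fv1, stmt14_fv2, stmt14_fv3,
          stmt14_fv4, stmt14_fv5, stmt14_fv6, stmt14_gv0, stmt14_gv1, stmt14_gv2,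
          stmt14_gv3, stmt14_gv4, stmt14_gv5] <;> ring
    · simp
    · intro x y _ _ hx hy
      simp only [Pi.add_apply, add_mul, Finset.sum_add_distrib, hx, hy, add_zero]
    · intro r x _ hx
      have key : ∑ j : Fin 7, (r * x j) * a ^ (j:ℕ) * b ^ (6 - (j:ℕ))
          = r * ∑ j : Fin 7, x j * a ^ (j:ℕ) * b ^ (6 - (j:ℕ)) := by
        rw [Finset.mul_sum]
        exact Finset.sum_congr rfl fun j _ => by ring
      simp only [Pi.smul_apply, smul_eq_mul, key, hx, mul_zero]
end

section
/- Let G(x,z) = ax + bz be a linear form with coprime integers a, b not both zero, and let N be a positive integer. Then the number of binary sextic forms F(x,z) = f₆x^6 + ⋯ + f₀z^6 with integer coefficients satisfying |fⱼ| ≤ N for all j that are divisible (in ℤ[x,z]) by (ax+bz)² is at most C·(N + H²)^5/H^{10} for an absolute constant C, where H = max{|a|,|b|}. -/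
open scoped BigOperators
open MvPolynomial

/-- The binary sextic form `F(x,z) = Σⱼ fⱼ x^j z^{6−j}` as a polynomial in two
variables `X 0 = x`, `X 1 = z`. -/
noncomputable def sexticForm (f : Fin 7 → ℤ) : MvPolynomial (Fin 2) ℤ :=
  ∑ j : Fin 7, C (f j) * X 0 ^ (j : ℕ) * X 1 ^ (6 - (j : ℕ))

/-- monomial exponent vector -/
noncomputable def dd (i j : ℕ) : Fin 2 →₀ ℕ := Finsupp.single 0 i + Finsupp.single 1 j

lemma dd_apply0 (i j : ℕ) : dd i j 0 = i := by
  simp [dd, Finsupp.single_apply]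

lemma dd_apply1 (i j : ℕ) : dd i j 1 = j := by
  simp [dd, Finsupp.single_apply]

lemma dd_le {i j k l : ℕ} : dd i j ≤ dd k l ↔ i ≤ k ∧ j ≤ l := by
  constructor
  · intro h
    exact ⟨by simpa [dd_apply0] using h 0, by simpa [dd_apply1] using h 1⟩
  · rintro ⟨h1, h2⟩ x
    fin_cases x <;> simpa [dd_apply0, dd_apply1]
    
lemma dd_sub (i j k l : ℕ) : dd k l - dd i j = dd (k - i) (l - j) := by
  ext x
  fin_cases x <;> simp [dd_apply0, dd_apply1, Finsupp.tsub_apply]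

lemma dd_inj {i j k l : ℕ} (h : dd i j = dd k l) : i = k ∧ j = l := by
  constructor
  · rw [← dd_apply0 i j, h, dd_apply0]
  · rw [← dd_apply1 i j, h, dd_apply1]

lemma mon_eq (c : ℤ) (i j : ℕ) :
    C c * X (0 : Fin 2) ^ i * X 1 ^ j = monomial (dd i j) c := by
  rw [X_pow_eq_monomial, X_pow_eq_monomial, mul_assoc, monomial_mul, C_mul_monomial]
  simp [dd]

lemma coeff_sexticForm (f : Fin 7 → ℤ) (k : Fin 7) :
    (sexticForm f).coeff (dd k (6 - (k:ℕ))) = f k := by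
  simp only [sexticForm, mon_eq]
  rw [coeff_sum]
  simp only [coeff_monomial]
  rw [Finset.sum_eq_single k]
  · simp
  · intro j _ hj
    rw [if_neg]
    intro h
    exact hj (Fin.ext ((dd_inj h).1))
  · intro h
    exact absurd (Finset.mem_univ k) h

lemma G2_eq (a b : ℤ) : (C a * X (0:Fin 2) + C b * X 1) ^ 2 =
    monomial (dd 2 0) (a^2) + monomial (dd 1 1) (2*a*b) + monomial (dd 0 2) (b^2) := by
  have h : ((C a * X (0:Fin 2) + C b * X 1))^2 =
      C (a^2) * X 0^2 * X 1^0 + C (2*a*b) * X 0^1 * X 1^1 + C (b^2) * X 0^0 * X 1^2 := by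
    simp only [C_mul, C_pow, map_ofNat]
    ring
  rw [h, mon_eq, mon_eq, mon_eq]

lemma coeff_G2_mul (a b : ℤ) (Q : MvPolynomial (Fin 2) ℤ) (k l : ℕ) :
    ((C a * X (0:Fin 2) + C b * X 1) ^ 2 * Q).coeff (dd k l) =
      a^2 * (if 2 ≤ k then Q.coeff (dd (k-2) l) else 0)
      + 2*a*b * (if 1 ≤ k ∧ 1 ≤ l then Q.coeff (dd (k-1) (l-1)) else 0)
      + b^2 * (if 2 ≤ l then Q.coeff (dd k (l-2)) else 0) := by
  rw [G2_eq, add_mul, add_mul, coeff_add, coeff_add,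
    coeff_monomial_mul', coeff_monomial_mul', coeff_monomial_mul']
  simp only [dd_le, dd_sub]
  norm_num

lemma relations (a b : ℤ) (f : Fin 7 → ℤ) (Q : MvPolynomial (Fin 2) ℤ)
    (hQ : sexticForm f = (C a * X 0 + C b * X 1) ^ 2 * Q) (c : ℕ → ℤ)
    (hc : ∀ j, c j = Q.coeff (dd j (4-j))) :
    f 0 = b^2 * c 0 ∧ f 1 = 2*a*b*c 0 + b^2*c 1 ∧ f 2 = a^2*c 0 + 2*a*b*c 1 + b^2*c 2 ∧
    f 3 = a^2*c 1 + 2*a*b*c 2 + b^2*c 3 ∧ f 4 = a^2*c 2 + 2*a*b*c 3 + b^2*c 4 ∧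
    f 5 = a^2*c 3 + 2*a*b*c 4 ∧ f 6 = a^2*c 4 := by
  have key : ∀ k : Fin 7, f k =
      a^2 * (if 2 ≤ (k:ℕ) then Q.coeff (dd ((k:ℕ)-2) (6-(k:ℕ))) else 0)
      + 2*a*b * (if 1 ≤ (k:ℕ) ∧ 1 ≤ 6-(k:ℕ) then Q.coeff (dd ((k:ℕ)-1) (6-(k:ℕ)-1)) else 0)
      + b^2 * (if 2 ≤ 6-(k:ℕ) then Q.coeff (dd (k:ℕ) (6-(k:ℕ)-2)) else 0) := by
    intro k
    rw [← coeff_sexticForm f k, hQ, coeff_G2_mul]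
  refine ⟨?_, ?_, ?_, ?_, ?_, ?_, ?_⟩
  · have h := key 0; norm_num [hc, show ((0:Fin 7):ℕ) = 0 from rfl] at h ⊢; linarith
  · have h := key 1; norm_num [hc, show ((1:Fin 7):ℕ) = 1 from rfl] at h ⊢; linarith
  · have h := key 2; norm_num [hc, show ((2:Fin 7):ℕ) = 2 from rfl] at h ⊢; linarith
  · have h := key 3; norm_num [hc, show ((3:Fin 7):ℕ) = 3 from rfl] at h ⊢; linarith
  · have h := key 4; norm_num [hc, show ((4:Fin 7):ℕ) = 4 from rfl] at h ⊢; linarith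
  · have h := key 5; norm_num [hc, show ((5:Fin 7):ℕ) = 5 from rfl] at h ⊢; linarith
  · have h := key 6; norm_num [hc, show ((6:Fin 7):ℕ) = 6 from rfl] at h ⊢; linarith

lemma step {a b f u v w N A B : ℤ} (hb : |b| ≤ |a|) (hf : |f| ≤ N)
    (hu : a^2 * |u| ≤ A) (hv : a^2 * |v| ≤ B)
    (heq : f = a^2*w + 2*a*b*u + b^2*v) : a^2*|w| ≤ N + 2*A + B := by
  have h1 : |a^2*w| = a^2*|w| := by rw [abs_mul, abs_of_nonneg (sq_nonneg a)]
  have h2 : a^2*w = f - 2*a*b*u - b^2*v := by linarith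
  have h3 : |a^2*w| ≤ |f| + |2*a*b*u| + |b^2*v| := by
    rw [h2]
    exact (abs_sub _ _).trans (add_le_add_left (abs_sub _ _) _)
  have h4 : |2*a*b*u| ≤ 2*(a^2*|u|) := by
    rw [abs_mul, abs_mul, abs_mul]
    have h6 : |a| * |b| ≤ |a| * |a| := mul_le_mul_of_nonneg_left hb (abs_nonneg a)
    have h7 : |a| * |a| = a^2 := by rw [abs_mul_abs_self]; ring
    have h8 : |(2:ℤ)| = 2 := by norm_num
    rw [h8]
    nlinarith [abs_nonneg u]
  have h5 : |b^2*v| ≤ a^2*|v| := by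
    rw [abs_mul, abs_of_nonneg (sq_nonneg b)]
    have hb2 : b^2 ≤ a^2 := by nlinarith [sq_abs a, sq_abs b, abs_nonneg b]
    exact mul_le_mul_of_nonneg_right hb2 (abs_nonneg v)
  linarith

lemma coeff_bound (a b N : ℤ) (hN : 0 ≤ N) (f : Fin 7 → ℤ) (hf : ∀ j, |f j| ≤ N)
    (Q : MvPolynomial (Fin 2) ℤ)
    (hQ : sexticForm f = (C a * X 0 + C b * X 1) ^ 2 * Q) (j : ℕ) (hj : j ≤ 4) :
    (max |a| |b|)^2 * |Q.coeff (dd j (4-j))| ≤ 49 * N := by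
  let c : ℕ → ℤ := fun j => Q.coeff (dd j (4-j))
  show (max |a| |b|)^2 * |c j| ≤ 49 * N
  have hc : ∀ j, c j = Q.coeff (dd j (4-j)) := fun _ => rfl
  obtain ⟨r0, r1, r2, r3, r4, r5, r6⟩ := relations a b f Q hQ c hc
  have hz : ∀ x : ℤ, x^2 * |(0:ℤ)| ≤ 0 := by intro x; simp
  rcases le_total |b| |a| with hb | hb
  · have hmax : max |a| |b| = |a| := max_eq_left hb
    rw [hmax, sq_abs]
    have h4 : a^2 * |c 4| ≤ N := by
      have h : |a^2 * c 4| ≤ N := by rw [← r6]; exact hf 6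
      rwa [abs_mul, abs_of_nonneg (sq_nonneg a)] at h
    have h3 : a^2 * |c 3| ≤ 3*N := by
      have := step hb (hf 5) h4 (hz a) (show f 5 = a^2*(c 3) + 2*a*b*(c 4) + b^2*0 by rw [r5]; ring)
      linarith
    have h2' : a^2 * |c 2| ≤ 8*N := by
      have := step hb (hf 4) h3 h4 (show f 4 = a^2*(c 2) + 2*a*b*(c 3) + b^2*(c 4) by rw [r4])
      linarith
    have h1 : a^2 * |c 1| ≤ 20*N := by
      have := step hb (hf 3) h2' h3 (show f 3 = a^2*(c 1) + 2*a*b*(c 2) + b^2*(c 3) by rw [r3])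
      linarith
    have h0 : a^2 * |c 0| ≤ 49*N := by
      have := step hb (hf 2) h1 h2' (show f 2 = a^2*(c 0) + 2*a*b*(c 1) + b^2*(c 2) by rw [r2])
      linarith
    interval_cases j <;> linarith
  · have hmax : max |a| |b| = |b| := max_eq_right hb
    rw [hmax, sq_abs]
    have h0 : b^2 * |c 0| ≤ N := by
      have h : |b^2 * c 0| ≤ N := by rw [← r0]; exact hf 0
      rwa [abs_mul, abs_of_nonneg (sq_nonneg b)] at h
    have h1 : b^2 * |c 1| ≤ 3*N := by
      have := step hb (hf 1) h0 (hz b) (show f 1 = b^2*(c 1) + 2*b*a*(c 0) + a^2*0 by rw [r1]; ring)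
      linarith
    have h2' : b^2 * |c 2| ≤ 8*N := by
      have := step hb (hf 2) h1 h0 (show f 2 = b^2*(c 2) + 2*b*a*(c 1) + a^2*(c 0) by rw [r2]; ring)
      linarith
    have h3 : b^2 * |c 3| ≤ 20*N := by
      have := step hb (hf 3) h2' h1 (show f 3 = b^2*(c 3) + 2*b*a*(c 2) + a^2*(c 1) by rw [r3]; ring)
      linarith
    have h4 : b^2 * |c 4| ≤ 49*N := by
      have := step hb (hf 4) h3 h2' (show f 4 = b^2*(c 4) + 2*b*a*(c 3) + a^2*(c 2) by rw [r4]; ring)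
      linarith
    interval_cases j <;> linarith

theorem stmt_17 :
    ∃ Cst : ℝ, 0 < Cst ∧
      ∀ (a b : ℤ), IsCoprime a b → ¬(a = 0 ∧ b = 0) →
        ∀ N : ℕ, 0 < N →
          (Nat.card {f : Fin 7 → ℤ //
              (∀ j, |f j| ≤ (N : ℤ)) ∧
              ∃ Q : MvPolynomial (Fin 2) ℤ, Q.IsHomogeneous 4 ∧
                sexticForm f = (C a * X 0 + C b * X 1) ^ 2 * Q} : ℝ)
            ≤ Cst * ((N : ℝ) + (max |(a:ℝ)| |(b:ℝ)|) ^ 2) ^ 5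
                / (max |(a:ℝ)| |(b:ℝ)|) ^ 10 := by
  refine ⟨99^5, by norm_num, ?_⟩
  intro a b hab hne N hN
  set H : ℤ := max |a| |b| with hHdef
  have hH1 : 1 ≤ H := by
    rcases not_and_or.mp hne with h | h
    · exact le_trans (Int.one_le_abs (by simpa using h)) (le_max_left _ _)
    · exact le_trans (Int.one_le_abs (by simpa using h)) (le_max_right _ _)
  have hH0 : (0:ℤ) < H^2 := by positivity
  set M : ℤ := 49 * N / H^2 with hMdef
  have hM0 : 0 ≤ M := Int.ediv_nonneg (by positivity) (by positivity)
  set S := {f : Fin 7 → ℤ //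
      (∀ j, |f j| ≤ (N : ℤ)) ∧
      ∃ Q : MvPolynomial (Fin 2) ℤ, Q.IsHomogeneous 4 ∧
        sexticForm f = (C a * X 0 + C b * X 1) ^ 2 * Q} with hSdef
  have memb : ∀ (s : S) (j : ℕ), j ≤ 4 →
      s.2.2.choose.coeff (dd j (4-j)) ∈ Finset.Icc (-M) M := by
    intro s j hj
    have hspec := s.2.2.choose_spec
    have hb := coeff_bound a b N (by positivity) s.1 s.2.1 _ hspec.2 j hj
    rw [Finset.mem_Icc, ← abs_le, hMdef, Int.le_ediv_iff_mul_le hH0, mul_comm]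
    exact hb
  let φ : S → (Fin 5 → (Finset.Icc (-M) M : Finset ℤ)) := fun s j =>
    ⟨s.2.2.choose.coeff (dd (j:ℕ) (4-(j:ℕ))), memb s j (Nat.lt_succ_iff.mp j.2)⟩
  have hinj : Function.Injective φ := by
    intro s t hst
    have hs := s.2.2.choose_spec
    have ht := t.2.2.choose_spec
    have hceq : ∀ j : ℕ, j ≤ 4 →
        s.2.2.choose.coeff (dd j (4-j)) = t.2.2.choose.coeff (dd j (4-j)) := by
      intro j hj
      exact Subtype.ext_iff.mp (congrFun hst ⟨j, by omega⟩)
    obtain ⟨rs0, rs1, rs2, rs3, rs4, rs5, rs6⟩ :=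
      relations a b s.1 _ hs.2 (fun j => s.2.2.choose.coeff (dd j (4-j))) (fun _ => rfl)
    obtain ⟨rt0, rt1, rt2, rt3, rt4, rt5, rt6⟩ :=
      relations a b t.1 _ ht.2 (fun j => t.2.2.choose.coeff (dd j (4-j))) (fun _ => rfl)
    apply Subtype.ext
    funext k
    fin_cases k
    · show s.1 0 = t.1 0
      rw [rs0, rt0, hceq 0 (by norm_num)]
    · show s.1 1 = t.1 1
      rw [rs1, rt1, hceq 0 (by norm_num), hceq 1 (by norm_num)]
    · show s.1 2 = t.1 2
      rw [rs2, rt2, hceq 0 (by norm_num), hceq 1 (by norm_num), hceq 2 (by norm_num)]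
    · show s.1 3 = t.1 3
      rw [rs3, rt3, hceq 1 (by norm_num), hceq 2 (by norm_num), hceq 3 (by norm_num)]
    · show s.1 4 = t.1 4
      rw [rs4, rt4, hceq 2 (by norm_num), hceq 3 (by norm_num), hceq 4 (by norm_num)]
    · show s.1 5 = t.1 5
      rw [rs5, rt5, hceq 3 (by norm_num), hceq 4 (by norm_num)]
    · show s.1 6 = t.1 6
      rw [rs6, rt6, hceq 4 (by norm_num)]
  have hcard : Nat.card S ≤ (2*M+1).toNat^5 := by
    have h1 := Nat.card_le_card_of_injective φ hinj
    have h2 : Nat.card (Fin 5 → (Finset.Icc (-M) M : Finset ℤ)) = (2*M+1).toNat^5 := by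
      rw [Nat.card_pi, Finset.prod_const, Finset.card_univ, Fintype.card_fin,
        Nat.card_eq_fintype_card, Fintype.card_coe, Int.card_Icc,
        show M + 1 - -M = 2*M+1 by ring]
    exact h1.trans_eq h2
  have hmaxR : max |(a:ℝ)| |(b:ℝ)| = (H:ℝ) := by
    rw [hHdef]; push_cast; rfl
  rw [hmaxR]
  have hHR : (1:ℝ) ≤ (H:ℝ) := by exact_mod_cast hH1
  have hHR2 : (0:ℝ) < (H:ℝ)^2 := by positivity
  have hMH : M * H^2 ≤ 49*N := Int.ediv_mul_le _ (ne_of_gt hH0)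
  have key : ((2*M+1).toNat : ℝ) ≤ 99 * ((N:ℝ) + (H:ℝ)^2) / (H:ℝ)^2 := by
    have h4 : ((2*M+1).toNat : ℝ) = 2*(M:ℝ)+1 := by
      have h5 := Int.toNat_of_nonneg (show (0:ℤ) ≤ 2*M+1 by linarith)
      exact_mod_cast congrArg (fun z : ℤ => (z:ℝ)) h5
    rw [h4, le_div_iff₀ hHR2]
    have h2 : (M:ℝ)*(H:ℝ)^2 ≤ 49*(N:ℝ) := by exact_mod_cast hMH
    have h3 : (0:ℝ) ≤ (N:ℝ) := Nat.cast_nonneg N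
    nlinarith
  calc (Nat.card S : ℝ) ≤ ((2*M+1).toNat : ℝ)^5 := by exact_mod_cast hcard
    _ ≤ (99 * ((N:ℝ) + (H:ℝ)^2) / (H:ℝ)^2)^5 :=
        pow_le_pow_left₀ (by positivity) key 5
    _ = 99^5 * ((N:ℝ) + (H:ℝ)^2)^5 / (H:ℝ)^10 := by
        rw [div_pow, mul_pow, ← pow_mul]
end
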